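/- arXiv:1808.09226 — 7 statements merged into one kernel-verified Lean document; each statement's English description precedes it below -/
import Mathlib

section
/- For any weight function ω : X×X → ℤ on the complete directed graph on finite nonempty X, there exists a Schulze winner, i.e., a candidate x such that S[ω](x,y) ≥ S[ω](y,x) for all y ≠ x, provided ω is skew-symmetric. -/
open scoped Classical

namespace Schulze

def pstr {X : Type} (ω : X → X → WithTop ℤ) : List X → WithTop ℤ
  | a :: b :: l => min (ω a b) (pstr ω (b :: l))
  | _ => ⊤

def IsPath {X : Type} (x y : X) (p : List X) : Prop :=
  p.Nodup ∧ p.head? = some x ∧ p.getLast? = some y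

noncomputable def S {X : Type} [Fintype X] [DecidableEq X]
    (ω : X → X → WithTop ℤ) (x y : X) : WithBot (WithTop ℤ) :=
  (Finset.univ.filter (fun p : {l : List X // l.Nodup} => IsPath x y p.1)).sup
    (fun p => ((pstr ω p.1 : WithTop ℤ) : WithBot (WithTop ℤ)))

def ofInt {X : Type} (ω : X → X → ℤ) : X → X → WithTop ℤ := fun x y => (ω x y : ℤ)

/-!
Path strength obeys the max-min triangle inequality `min (S x y) (S y z) ≤ S x z`: concatenate
optimal paths `x ⇝ y ⇝ z` and cut out the cycles of the resulting walk, which cannot lower its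
strength. Hence the Schulze relation "`x` beats `y` iff `S y x < S x y`" is a strict order, and a
strict order on a finite nonempty set has an element beaten by nobody: a Schulze winner.
-/

section Strength

variable {X : Type} (ω : X → X → WithTop ℤ)

lemma pstr_append_cons (p : List X) (v : X) (q : List X) :
    pstr ω (p ++ v :: q) = min (pstr ω (p ++ [v])) (pstr ω (v :: q)) := by
  induction p with
  | nil => simp [pstr]
  | cons a p ih =>
    rcases p with _ | ⟨b, p⟩
    · rcases q with _ | ⟨c, q⟩ <;> simp [pstr]
    · simp only [List.cons_append, pstr] at ih ⊢
      rw [ih, min_assoc]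

lemma exists_nodup_pstr_le (w : List X) :
    ∃ r : List X, r.Nodup ∧ r.head? = w.head? ∧ r.getLast? = w.getLast? ∧
      pstr ω w ≤ pstr ω r := by
  induction w with
  | nil => exact ⟨[], List.nodup_nil, rfl, rfl, le_rfl⟩
  | cons x w ih =>
    obtain ⟨r, hr, hhead, hlast, hle⟩ := ih
    by_cases hx : x ∈ r
    · -- `r` returns to `x`: keep only its part from `x` on.
      obtain ⟨a, c, rfl⟩ := List.append_of_mem hx
      refine ⟨x :: c, (List.nodup_append.mp hr).2.1, rfl, ?_, ?_⟩
      · simp [List.getLast?_cons, ← hlast, List.getLast?_append]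
      · calc pstr ω (x :: w) ≤ pstr ω w := by
              rcases w with _ | ⟨y, w⟩ <;> simp [pstr]
          _ ≤ pstr ω (a ++ x :: c) := hle
          _ ≤ pstr ω (x :: c) := by rw [pstr_append_cons]; exact min_le_right _ _
    · refine ⟨x :: r, List.nodup_cons.mpr ⟨hx, hr⟩, rfl,
        by simp [List.getLast?_cons, hlast], ?_⟩
      rcases w with _ | ⟨y, w⟩
      · obtain rfl : r = [] := by simpa using hhead
        simp [pstr]
      · obtain ⟨r, rfl⟩ := List.head?_eq_some_iff.mp hhead
        exact min_le_min le_rfl hle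

end Strength

section PathStrength

variable {X : Type} [Fintype X] [DecidableEq X] (ω : X → X → WithTop ℤ)

lemma pstr_le_S {x y : X} {p : List X} (hp : IsPath x y p) :
    (pstr ω p : WithBot (WithTop ℤ)) ≤ S ω x y :=
  Finset.le_sup (f := fun p : {l : List X // l.Nodup} => (pstr ω p.1 : WithBot (WithTop ℤ)))
    (b := ⟨p, hp.1⟩) (by simp [hp])

lemma exists_isPath_S_eq (x y : X) :
    ∃ p : List X, IsPath x y p ∧ S ω x y = pstr ω p := by
  have hne : (Finset.univ.filter
      (fun p : {l : List X // l.Nodup} => IsPath x y p.1)).Nonempty := by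
    by_cases hxy : x = y
    · exact ⟨⟨[x], List.nodup_singleton x⟩, by simp [IsPath, hxy]⟩
    · exact ⟨⟨[x, y], by simp [hxy]⟩,
        Finset.mem_filter.mpr ⟨Finset.mem_univ _, by simp [IsPath, hxy]⟩⟩
  obtain ⟨p, hp, hsup⟩ := Finset.exists_mem_eq_sup _ hne
    (fun p : {l : List X // l.Nodup} => (pstr ω p.1 : WithBot (WithTop ℤ)))
  exact ⟨p.1, (Finset.mem_filter.mp hp).2, hsup⟩

lemma min_S_le_S (x y z : X) : min (S ω x y) (S ω y z) ≤ S ω x z := by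
  obtain ⟨p, ⟨-, hpx, hpy⟩, hp⟩ := exists_isPath_S_eq ω x y
  obtain ⟨q, ⟨-, hqy, hqz⟩, hq⟩ := exists_isPath_S_eq ω y z
  obtain ⟨a, rfl⟩ := List.getLast?_eq_some_iff.mp hpy
  obtain ⟨c, rfl⟩ := List.head?_eq_some_iff.mp hqy
  obtain ⟨r, hr, hrx, hrz, hle⟩ := exists_nodup_pstr_le ω (a ++ y :: c)
  have hrpath : IsPath x z r := by
    refine ⟨hr, ?_, ?_⟩
    · rw [hrx, ← hpx]; cases a <;> rfl
    · rw [hrz, ← hqz, List.getLast?_append, List.getLast?_cons]; rfl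
  calc min (S ω x y) (S ω y z)
      = (pstr ω (a ++ y :: c) : WithBot (WithTop ℤ)) := by
        rw [hp, hq, ← WithBot.coe_min, ← pstr_append_cons]
    _ ≤ pstr ω r := WithBot.coe_le_coe.mpr hle
    _ ≤ S ω x z := pstr_le_S ω hrpath

end PathStrength

def Beats {X : Type} [Fintype X] [DecidableEq X] (ω : X → X → WithTop ℤ) (x y : X) : Prop :=
  S ω y x < S ω x y

section Beats

variable {X : Type} [Fintype X] [DecidableEq X] (ω : X → X → WithTop ℤ)

lemma beats_trans {x y z : X} (hxy : Beats ω x y) (hyz : Beats ω y z) : Beats ω x z := by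
  unfold Beats at *
  by_contra! hzx
  have hxyz := min_S_le_S ω x y z
  rcases le_total (S ω x y) (S ω y z) with h | h
  · have hyzx := min_S_le_S ω y z x
    have : S ω x y ≤ S ω z x := (min_eq_left h ▸ hxyz).trans hzx
    exact (le_min h this).trans hyzx |>.not_gt hxy
  · have hzxy := min_S_le_S ω z x y
    have : S ω y z ≤ S ω z x := (min_eq_right h ▸ hxyz).trans hzx
    exact (le_min this h).trans hzxy |>.not_gt hyz

instance : IsTrans X (Beats ω) := ⟨fun _ _ _ => beats_trans ω⟩

instance : Std.Irrefl (Beats ω) := ⟨fun _ => lt_irrefl _⟩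

lemma exists_forall_not_beats [Nonempty X] : ∃ x : X, ∀ y, ¬ Beats ω y x := by
  obtain ⟨x, -, hx⟩ := (Finite.wellFounded_of_trans_of_irrefl (Beats ω)).has_min Set.univ
    Set.univ_nonempty
  exact ⟨x, fun y => hx y (Set.mem_univ y)⟩

end Beats

theorem stmt1_general {X : Type} [Fintype X] [DecidableEq X] [Nonempty X]
    (ω : X → X → ℤ) :
    ∃ x : X, ∀ y : X, y ≠ x → S (ofInt ω) y x ≤ S (ofInt ω) x y := by
  obtain ⟨x, hx⟩ := exists_forall_not_beats (ofInt ω)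
  exact ⟨x, fun y _ => not_lt.mp (hx y)⟩

theorem stmt1 {X : Type} [Fintype X] [DecidableEq X] [Nonempty X]
    (ω : X → X → ℤ) (hskew : ∀ x y : X, x ≠ y → ω x y = - ω y x) :
    ∃ x : X, ∀ y : X, y ≠ x → S (ofInt ω) y x ≤ S (ofInt ω) x y :=
  stmt1_general ω

end Schulze
end

section
/- A candidate x is a unique Schulze winner (the only candidate z with S[ω](z,y) ≥ S[ω](y,z) for all y ≠ z) if and only if S[ω](x,y) > S[ω](y,x) for all y ≠ x. -/
open scoped Classical

namespace Schulze

/-!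
The strict Schulze relation `S ω b a < S ω a b` is transitive. This follows from the
min-triangle inequality `min (S ω a b) (S ω b c) ≤ S ω a c`: concatenating an `a`-`b` path with a
`b`-`c` path gives a walk whose strength is the minimum of the two, and cutting out its cycles
yields an `a`-`c` path that is at least as strong. On a finite set a transitive irreflexive
relation is well founded, so if every candidate other than `x` is beaten by someone, induction along
the relation shows that `x` beats everyone. The converse is immediate.
-/

section Walk

variable {X : Type} (ω : X → X → WithTop ℤ)

lemma pstr_append (a : X) : ∀ s t : List X,
    pstr ω (s ++ a :: t) = min (pstr ω (s ++ [a])) (pstr ω (a :: t))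
  | [], t => by simp [pstr]
  | [x], t => by simp [pstr]
  | x :: y :: s, t => by
    have ih := pstr_append a (y :: s) t
    simp only [List.cons_append] at ih ⊢
    rw [pstr, pstr, ih, min_assoc]

lemma pstr_cons_le_pstr_cons (x : X) {t q : List X}
    (hhead : q.head? = t.head?) (hle : pstr ω t ≤ pstr ω q) :
    pstr ω (x :: t) ≤ pstr ω (x :: q) := by
  rcases t with _ | ⟨b, t⟩ <;> rcases q with _ | ⟨c, q⟩
  · exact le_rfl
  all_goals simp only [List.head?_nil, List.head?_cons, reduceCtorEq, Option.some.injEq] at hhead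
  subst hhead
  exact min_le_min le_rfl hle

lemma exists_nodup_le_pstr : ∀ p : List X,
    ∃ q : List X, q.Nodup ∧ q.head? = p.head? ∧ q.getLast? = p.getLast? ∧ pstr ω p ≤ pstr ω q
  | [] => ⟨[], List.nodup_nil, rfl, rfl, le_rfl⟩
  | x :: t => by
    obtain ⟨q, hnd, hhead, hlast, hle⟩ := exists_nodup_le_pstr t
    have hcons := pstr_cons_le_pstr_cons ω x hhead hle
    -- if `x` already occurs in `q`, the walk `x :: q` closes a cycle: keep only what follows it
    by_cases hx : x ∈ q
    · obtain ⟨q₁, q₂, rfl⟩ := List.append_of_mem hx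
      refine ⟨x :: q₂, ?_, rfl, ?_, ?_⟩
      · exact (List.nodup_append.1 hnd).2.1
      · rw [List.getLast?_append_cons, List.getLast?_cons] at hlast
        simp only [List.getLast?_cons, ← hlast, Option.getD_some]
      · calc pstr ω (x :: t) ≤ pstr ω ((x :: q₁) ++ x :: q₂) := hcons
          _ ≤ pstr ω (x :: q₂) := by rw [pstr_append]; exact min_le_right _ _
    · refine ⟨x :: q, List.nodup_cons.2 ⟨hx, hnd⟩, rfl, ?_, hcons⟩
      simp only [List.getLast?_cons, hlast]

end Walk

lemma rel_of_forall_ne_exists_rel {α : Type*} [Finite α] (r : α → α → Prop) [IsTrans α r]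
    [Std.Irrefl r] {x : α} (h : ∀ z ≠ x, ∃ w, r w z) : ∀ z ≠ x, r x z := by
  intro z
  induction z using (Finite.wellFounded_of_trans_of_irrefl r).induction with
  | _ z ih =>
    intro hz
    obtain ⟨w, hwz⟩ := h z hz
    by_cases hw : w = x
    · exact hw ▸ hwz
    · exact _root_.trans (ih w hwz hw) hwz

section Strength

variable {X : Type} [Fintype X] [DecidableEq X] (ω : X → X → WithTop ℤ)

lemma pstr_le_S_s3 {a c : X} {p : List X} (hhead : p.head? = some a) (hlast : p.getLast? = some c) :
    (pstr ω p : WithBot (WithTop ℤ)) ≤ S ω a c := by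
  obtain ⟨q, hnd, hqhead, hqlast, hle⟩ := exists_nodup_le_pstr ω p
  calc (pstr ω p : WithBot (WithTop ℤ)) ≤ pstr ω q := WithBot.coe_le_coe.2 hle
    _ ≤ S ω a c :=
      Finset.le_sup (f := fun q : {l : List X // l.Nodup} => (pstr ω q.1 : WithBot (WithTop ℤ)))
        (b := ⟨q, hnd⟩)
        (Finset.mem_filter.2 ⟨Finset.mem_univ _, hnd, hqhead.trans hhead, hqlast.trans hlast⟩)

lemma min_S_le_S_s3 (a b c : X) : min (S ω a b) (S ω b c) ≤ S ω a c := by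
  rw [S, S, Finset.sup_inf_sup]
  refine Finset.sup_le fun ⟨⟨p, _⟩, ⟨q, _⟩⟩ hpq => ?_
  simp only [Finset.mem_product, Finset.mem_filter, Finset.mem_univ, true_and] at hpq
  obtain ⟨⟨-, hphead, hplast⟩, -, hqhead, hqlast⟩ := hpq
  obtain ⟨p, rfl⟩ := List.getLast?_eq_some_iff.1 hplast
  obtain ⟨q, rfl⟩ := List.head?_eq_some_iff.1 hqhead
  rw [← WithBot.coe_min, ← pstr_append]
  refine pstr_le_S_s3 ω ?_ (by rwa [List.getLast?_append_cons])
  simpa only [List.head?_append, List.head?_cons] using hphead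

lemma S_lt_trans {a b c : X} (hab : S ω b a < S ω a b) (hbc : S ω c b < S ω b c) :
    S ω c a < S ω a c := by
  by_contra! hca
  have hm : min (S ω a b) (S ω b c) ≤ S ω c a := (min_S_le_S_s3 ω a b c).trans hca
  have hba : min (S ω a b) (S ω b c) ≤ S ω b a :=
    (le_min (min_le_right _ _) hm).trans (min_S_le_S_s3 ω b c a)
  have hcb : min (S ω a b) (S ω b c) ≤ S ω c b :=
    (le_min hm (min_le_left _ _)).trans (min_S_le_S_s3 ω c a b)
  rcases min_choice (S ω a b) (S ω b c) with h | h <;> rw [h] at hba hcb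
  · exact hab.not_ge hba
  · exact hbc.not_ge hcb

theorem unique_winner_iff (x : X) :
    ((∀ y : X, y ≠ x → S ω y x ≤ S ω x y) ∧
      (∀ z : X, (∀ y : X, y ≠ z → S ω y z ≤ S ω z y) → z = x))
    ↔ (∀ y : X, y ≠ x → S ω y x < S ω x y) := by
  constructor
  · rintro ⟨-, hunique⟩
    let beats (a b : X) : Prop := S ω b a < S ω a b
    have : IsTrans X beats := ⟨fun _ _ _ => S_lt_trans ω⟩
    have : Std.Irrefl beats := ⟨fun _ => lt_irrefl _⟩
    refine rel_of_forall_ne_exists_rel beats fun z hz => ?_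
    by_contra! hunbeaten
    exact hz (hunique z fun y _ => not_lt.1 (hunbeaten y))
  · intro hbeats
    refine ⟨fun y hy => (hbeats y hy).le, fun z hz => ?_⟩
    by_contra hzx
    exact (hz x (Ne.symm hzx)).not_gt (hbeats z hzx)

end Strength

theorem stmt3_general {X : Type} [Fintype X] [DecidableEq X]
    (ω : X → X → ℤ) (x : X) :
    ((∀ y : X, y ≠ x → S (ofInt ω) y x ≤ S (ofInt ω) x y) ∧
      (∀ z : X, (∀ y : X, y ≠ z → S (ofInt ω) y z ≤ S (ofInt ω) z y) → z = x))
    ↔ (∀ y : X, y ≠ x → S (ofInt ω) y x < S (ofInt ω) x y) :=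
  unique_winner_iff (ofInt ω) x

theorem stmt3 {X : Type} [Fintype X] [DecidableEq X]
    (ω : X → X → ℤ) (hskew : ∀ x y : X, x ≠ y → ω x y = - ω y x) (x : X) :
    ((∀ y : X, y ≠ x → S (ofInt ω) y x ≤ S (ofInt ω) x y) ∧
      (∀ z : X, (∀ y : X, y ≠ z → S (ofInt ω) y z ≤ S (ofInt ω) z y) → z = x))
    ↔ (∀ y : X, y ≠ x → S (ofInt ω) y x < S (ofInt ω) x y) :=
  stmt3_general ω x

end Schulze
end

section
/- (Correctness of Rule 2) Suppose U : X → ℤ∪{∞} satisfies U(c) = ∞ and U(z) > S[ω](z,c) for all z ≠ c, where ω satisfies ω(y,z) ≥ ω°(y,z) − W for all edges and c is such that the invariant holds. If x, y ∈ X∖{c} satisfy U(y) < U(x) and ω°(y,x) − W ≥ U(y), then U(y) > S[ω](x,c); i.e., setting U(x) ← U(y) preserves the invariant. -/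
open scoped Classical

namespace Schulze

lemma pstr_cons_le {X : Type} (ω : X → X → WithTop ℤ) (a : X) (l : List X) :
    pstr ω (a :: l) ≤ pstr ω l := by
  cases l with
  | nil => simp [pstr]
  | cons b t => exact min_le_right _ _

lemma pstr_append_le {X : Type} (ω : X → X → WithTop ℤ) (l1 l2 : List X) :
    pstr ω (l1 ++ l2) ≤ pstr ω l2 := by
  induction l1 with
  | nil => simp
  | cons a l1 ih => exact le_trans (pstr_cons_le ω a (l1 ++ l2)) ih

lemma le_S {X : Type} [Fintype X] [DecidableEq X] (ω : X → X → WithTop ℤ) {x y : X}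
    {q : List X} (hq : q.Nodup) (hpath : IsPath x y q) :
    ((pstr ω q : WithTop ℤ) : WithBot (WithTop ℤ)) ≤ S ω x y :=
  Finset.le_sup (f := fun p : {l : List X // l.Nodup} =>
    ((pstr ω p.1 : WithTop ℤ) : WithBot (WithTop ℤ)))
    (b := ⟨q, hq⟩) (by simp [hpath])

theorem stmt7 {X : Type} [Fintype X] [DecidableEq X]
    (ωo : X → X → ℤ) (W : ℤ) (hW : 0 ≤ W) (c : X)
    (ω : X → X → ℤ)
    (hbound : ∀ y z : X, y ≠ z → ωo y z - W ≤ ω y z)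
    (U : X → WithTop ℤ) (hUc : U c = ⊤)
    (hinv : ∀ z : X, z ≠ c → S (ofInt ω) z c < ((U z : WithBot (WithTop ℤ))))
    (x y : X) (hx : x ≠ c) (hy : y ≠ c)
    (hUxy : U y < U x)
    (hR2 : U y ≤ ((ωo y x - W : ℤ) : WithTop ℤ)) :
    S (ofInt ω) x c < ((U y : WithBot (WithTop ℤ))) := by
  by_contra h
  push_neg at h
  have hbot : (⊥ : WithBot (WithTop ℤ)) < ((U y : WithBot (WithTop ℤ))) :=
    WithBot.bot_lt_coe _
  rw [S, Finset.le_sup_iff hbot] at h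
  obtain ⟨p, hp, hle⟩ := h
  simp only [Finset.mem_filter, Finset.mem_univ, true_and] at hp
  obtain ⟨hnd, hhead, hlast⟩ := hp
  have hle' : U y ≤ pstr (ofInt ω) p.1 := by exact_mod_cast hle
  by_cases hmem : y ∈ p.1
  · obtain ⟨l1, l2, hsplit⟩ := List.append_of_mem hmem
    have hnd' : (y :: l2).Nodup := (hsplit ▸ hnd).of_append_right
    have hlast' : (y :: l2).getLast? = some c := by
      rw [hsplit, List.getLast?_append_cons] at hlast
      exact hlast
    have hpath : IsPath y c (y :: l2) := ⟨hnd', rfl, hlast'⟩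
    have h1 : U y ≤ pstr (ofInt ω) (y :: l2) :=
      le_trans hle' (by rw [hsplit]; exact pstr_append_le _ _ _)
    have h2 := le_trans (WithBot.coe_le_coe.mpr h1) (le_S (ofInt ω) hnd' hpath)
    exact absurd (lt_of_le_of_lt h2 (hinv y hy)) (lt_irrefl _)
  · obtain ⟨rest, hrest⟩ : ∃ rest, p.1 = x :: rest := by
      cases hp1 : p.1 with
      | nil => rw [hp1] at hhead; simp at hhead
      | cons a t =>
        rw [hp1] at hhead; simp at hhead
        exact ⟨t, by rw [hhead]⟩
    have hyx : y ≠ x := fun he => absurd (he ▸ hUxy) (lt_irrefl _)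
    have hnd' : (y :: p.1).Nodup := List.nodup_cons.mpr ⟨hmem, hnd⟩
    have hlast' : (y :: p.1).getLast? = some c := by
      rw [hrest, List.getLast?_cons_cons, ← hrest]; exact hlast
    have hpath : IsPath y c (y :: p.1) := ⟨hnd', rfl, hlast'⟩
    have hωyx : U y ≤ ofInt ω y x := by
      refine le_trans hR2 ?_
      simp only [ofInt]
      exact_mod_cast hbound y x hyx
    have h1 : U y ≤ pstr (ofInt ω) (y :: p.1) := by
      rw [hrest]
      exact le_min hωyx (hrest ▸ hle')
    have h2 := le_trans (WithBot.coe_le_coe.mpr h1) (le_S (ofInt ω) hnd' hpath)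
    exact absurd (lt_of_le_of_lt h2 (hinv y hy)) (lt_irrefl _)

end Schulze
end

section
/- (Termination/complexity of Algorithm 1) Each application of Rule 1 or Rule 2 strictly decreases U at some candidate, and U(x) only ever takes values in the finite set {ω°(y,z) + W : y ≠ z ∈ X} ∪ {initial value}; consequently the rule-application loop terminates after at most O(m³) rule applications, where m = |X|. -/
/-!
Each rule application lowers `U` at a single candidate `x ≠ c`. Every value `U` takes away from
`c` is an edge value `ω°(y,z) + W` with `y ≠ z`: Rule 2 copies such a value, and Rule 1 sets
`U(x)` to the weight `min(ω°(y,z) + W, U(z))` of an edge of a simple path starting at `c`, so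
`z ≠ c`. Hence the number of pairs `(x, v)` with `v` an edge value and `U(x) ≤ v` grows strictly
with each step, and it is at most `m · m²`.
-/

open scoped Classical

namespace Schulze

theorem exists_pstr_eq_of_nodup {X : Type} (ω : X → X → WithTop ℤ) {a b : X} {l : List X}
    (hnd : (a :: b :: l).Nodup) : ∃ y z, y ≠ z ∧ z ∈ b :: l ∧ pstr ω (a :: b :: l) = ω y z := by
  induction l generalizing a b with
  | nil =>
    exact ⟨a, b, by simpa using hnd, List.mem_singleton_self b, by simp [pstr]⟩
  | cons d l ih =>
    obtain ⟨y, z, hyz, hz, hpstr⟩ := ih (List.nodup_cons.mp hnd).2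
    rcases min_choice (ω a b) (pstr ω (b :: d :: l)) with h | h
    · exact ⟨a, b, fun hab => (List.nodup_cons.mp hnd).1 (hab ▸ List.mem_cons_self),
        List.mem_cons_self, h⟩
    · exact ⟨y, z, hyz, List.mem_cons_of_mem b hz, h.trans hpstr⟩

theorem exists_edge_of_S_eq {X : Type} [Fintype X] [DecidableEq X]
    {ω : X → X → WithTop ℤ} {x y : X} (hxy : x ≠ y) {v : WithTop ℤ} (h : S ω x y = v) :
    ∃ a b, a ≠ b ∧ b ≠ x ∧ ω a b = v := by
  set s := Finset.univ.filter (fun p : {l : List X // l.Nodup} => IsPath x y p.1)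
  rcases s.eq_empty_or_nonempty with hs | hs
  · simp [S, s, hs] at h
  obtain ⟨p, hp, hsup⟩ := Finset.exists_mem_eq_sup s hs
    (fun p => ((pstr ω p.1 : WithTop ℤ) : WithBot (WithTop ℤ)))
  obtain ⟨hnd, hhead, hlast⟩ := (Finset.mem_filter.mp hp).2
  obtain ⟨b, l, hpl⟩ : ∃ b l, p.1 = x :: b :: l := by
    match hl : p.1 with
    | [] => simp [hl] at hhead
    | [a] => simp_all
    | a :: b :: l => exact ⟨b, l, by simp_all⟩
  rw [hpl] at hnd
  obtain ⟨a, z, haz, hz, hpstr⟩ := exists_pstr_eq_of_nodup ω hnd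
  refine ⟨a, z, haz, fun hzx => (List.nodup_cons.mp hnd).1 (hzx ▸ hz), ?_⟩
  have : (pstr ω p.1 : WithBot (WithTop ℤ)) = v := hsup ▸ h
  rw [← hpstr, ← hpl]
  exact_mod_cast this

noncomputable def potential {X : Type} [Fintype X] (V : Finset ℤ) (U : X → WithTop ℤ) : ℕ :=
  ∑ x, (V.filter fun v : ℤ => U x ≤ (v : WithTop ℤ)).card

theorem potential_le {X : Type} [Fintype X] (V : Finset ℤ) (U : X → WithTop ℤ) :
    potential V U ≤ Fintype.card X * V.card :=
  calc potential V U ≤ ∑ _x : X, V.card :=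
        Finset.sum_le_sum fun _ _ => Finset.card_le_card (Finset.filter_subset _ _)
    _ = Fintype.card X * V.card := by simp

theorem potential_lt_of_lt {X : Type} [Fintype X] {V : Finset ℤ} {U U' : X → WithTop ℤ}
    (hle : U' ≤ U) {x : X} (hlt : U' x < U x) {v : ℤ} (hv : v ∈ V) (hx : U' x = v) :
    potential V U < potential V U' := by
  have hsub : ∀ z, V.filter (fun v : ℤ => U z ≤ (v : WithTop ℤ)) ⊆
      V.filter (fun v : ℤ => U' z ≤ (v : WithTop ℤ)) :=
    fun z => Finset.monotone_filter_right V fun _ _ h => (hle z).trans h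
  refine Finset.sum_lt_sum (fun z _ => Finset.card_le_card (hsub z))
    ⟨x, Finset.mem_univ x, Finset.card_lt_card ⟨hsub x, fun hsup => ?_⟩⟩
  have := (Finset.mem_filter.mp (hsup (Finset.mem_filter.mpr ⟨hv, hx.le⟩))).2
  exact (hx ▸ hlt).not_ge this

section Algorithm

variable {X : Type} [Fintype X] (ωo : X → X → ℤ) (W : ℤ) (c : X)

def edgeValues : Finset ℤ :=
  Finset.univ.offDiag.image fun p : X × X => ωo p.1 p.2 + W

theorem card_edgeValues_le : (edgeValues ωo W).card ≤ Fintype.card X ^ 2 :=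
  calc (edgeValues ωo W).card ≤ (Finset.univ.offDiag : Finset (X × X)).card :=
        Finset.card_image_le
    _ ≤ Fintype.card X ^ 2 := by
        rw [Finset.offDiag_card, Finset.card_univ, sq]
        exact Nat.sub_le _ _

variable [DecidableEq X]

/-- The weights `ω'` of Rule 1. -/
def cappedWeight (U : X → WithTop ℤ) (y z : X) : WithTop ℤ :=
  min ((ωo y z + W : ℤ) : WithTop ℤ) (U z)

/-- One application of Rule 1 or Rule 2, turning `U` into `U'`. -/
def RuleStep (U U' : X → WithTop ℤ) : Prop :=
  ∃ x : X, x ≠ c ∧ (∀ z : X, z ≠ x → U' z = U z) ∧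
    ((S (cappedWeight ωo W U) c x < (U x : WithBot (WithTop ℤ)) ∧
        (U' x : WithBot (WithTop ℤ)) = S (cappedWeight ωo W U) c x) ∨
      (∃ y : X, y ≠ c ∧ U y < U x ∧ U y ≤ ((ωo y x - W : ℤ) : WithTop ℤ) ∧ U' x = U y))

def TakesEdgeValues (U : X → WithTop ℤ) : Prop :=
  ∀ x : X, x ≠ c → ∃ y z : X, y ≠ z ∧ U x = ((ωo y z + W : ℤ) : WithTop ℤ)

variable {ωo W c}

theorem RuleStep.exists_lt {U U' : X → WithTop ℤ} (h : RuleStep ωo W c U U') :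
    ∃ x, x ≠ c ∧ (∀ z, z ≠ x → U' z = U z) ∧ U' x < U x := by
  obtain ⟨x, hxc, hother, ⟨hlt, heq⟩ | ⟨y, -, hyx, -, heq⟩⟩ := h
  · exact ⟨x, hxc, hother, WithBot.coe_lt_coe.mp (heq ▸ hlt)⟩
  · exact ⟨x, hxc, hother, heq ▸ hyx⟩

theorem RuleStep.le {U U' : X → WithTop ℤ} (h : RuleStep ωo W c U U') : U' ≤ U := by
  obtain ⟨x, -, hother, hlt⟩ := h.exists_lt
  intro z
  rcases eq_or_ne z x with rfl | hzx
  · exact hlt.le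
  · exact (hother z hzx).le

theorem RuleStep.takesEdgeValues {U U' : X → WithTop ℤ} (h : RuleStep ωo W c U U')
    (hU : TakesEdgeValues ωo W c U) : TakesEdgeValues ωo W c U' := by
  obtain ⟨x, hxc, hother, ⟨-, heq⟩ | ⟨y, hyc, -, -, heq⟩⟩ := h
  all_goals
    intro z hzc
    rcases eq_or_ne z x with rfl | hzx
    swap
    · exact hother z hzx ▸ hU z hzc
  · obtain ⟨a, b, hab, hbc, hw⟩ := exists_edge_of_S_eq (Ne.symm hzc) heq.symm
    rcases min_choice ((ωo a b + W : ℤ) : WithTop ℤ) (U b) with hmin | hmin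
    · exact ⟨a, b, hab, (hw.symm.trans hmin)⟩
    · exact hw.symm.trans hmin ▸ hU b hbc
  · exact heq ▸ hU y hyc

theorem RuleStep.potential_lt {U U' : X → WithTop ℤ} (h : RuleStep ωo W c U U')
    (hU' : TakesEdgeValues ωo W c U') :
    potential (edgeValues ωo W) U < potential (edgeValues ωo W) U' := by
  obtain ⟨x, hxc, -, hlt⟩ := h.exists_lt
  obtain ⟨y, z, hyz, hx⟩ := hU' x hxc
  exact potential_lt_of_lt h.le hlt
    (Finset.mem_image.mpr ⟨(y, z), Finset.mem_offDiag.mpr ⟨Finset.mem_univ _,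
      Finset.mem_univ _, hyz⟩, rfl⟩) hx

end Algorithm

theorem stmt8_general {X : Type} [Fintype X] [DecidableEq X]
    (ωo : X → X → ℤ) (W : ℤ) (c : X)
    (Us : ℕ → X → WithTop ℤ) (N : ℕ)
    (h0 : ∀ x : X, x ≠ c →
      (∃ y z : X, y ≠ z ∧ Us 0 x = ((ωo y z + W : ℤ) : WithTop ℤ)) ∧
      (∀ y z : X, y ≠ z → ((ωo y z + W : ℤ) : WithTop ℤ) ≤ Us 0 x))
    (hstep : ∀ t, t < N → ∃ x : X, x ≠ c ∧
      (∀ z : X, z ≠ x → Us (t + 1) z = Us t z) ∧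
      ((S (fun y z => min (((ωo y z + W : ℤ) : WithTop ℤ)) (Us t z)) c x
          < ((Us t x : WithBot (WithTop ℤ))) ∧
        ((Us (t + 1) x : WithBot (WithTop ℤ)))
          = S (fun y z => min (((ωo y z + W : ℤ) : WithTop ℤ)) (Us t z)) c x)
       ∨ (∃ y : X, y ≠ c ∧ Us t y < Us t x ∧
            Us t y ≤ ((ωo y x - W : ℤ) : WithTop ℤ) ∧
            Us (t + 1) x = Us t y))) :
    (∀ t, t < N → ∃ x : X, x ≠ c ∧ Us (t + 1) x < Us t x) ∧
    (∀ t, t ≤ N → ∀ x : X, x ≠ c →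
      ∃ y z : X, y ≠ z ∧ Us t x = ((ωo y z + W : ℤ) : WithTop ℤ)) ∧
    N ≤ (Fintype.card X) ^ 3 := by
  have hrule : ∀ t < N, RuleStep ωo W c (Us t) (Us (t + 1)) := hstep
  have hvalues : ∀ t ≤ N, TakesEdgeValues ωo W c (Us t) := by
    intro t ht
    induction t with
    | zero => exact fun x hx => (h0 x hx).1
    | succ t ih => exact (hrule t ht).takesEdgeValues (ih (Nat.le_of_succ_le ht))
  refine ⟨fun t ht => ?_, hvalues, ?_⟩
  · obtain ⟨x, hxc, -, hlt⟩ := (hrule t ht).exists_lt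
    exact ⟨x, hxc, hlt⟩
  have hmono : StrictMonoOn (fun t => potential (edgeValues ωo W) (Us t)) (Set.Iic N) :=
    strictMonoOn_Iic_of_lt_succ fun t ht => (hrule t ht).potential_lt (hvalues (t + 1) ht)
  calc N ≤ potential (edgeValues ωo W) (Us N) := hmono.Iic_id_le N le_rfl
    _ ≤ Fintype.card X * Fintype.card X ^ 2 :=
        (potential_le _ _).trans (Nat.mul_le_mul_left _ (card_edgeValues_le ωo W))
    _ = Fintype.card X ^ 3 := by ring

theorem stmt8 {X : Type} [Fintype X] [DecidableEq X]
    (ωo : X → X → ℤ) (W : ℤ) (hW : 0 ≤ W) (c : X)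
    (Us : ℕ → X → WithTop ℤ) (N : ℕ)
    (h0c : Us 0 c = ⊤)
    (h0 : ∀ x : X, x ≠ c →
      (∃ y z : X, y ≠ z ∧ Us 0 x = ((ωo y z + W : ℤ) : WithTop ℤ)) ∧
      (∀ y z : X, y ≠ z → ((ωo y z + W : ℤ) : WithTop ℤ) ≤ Us 0 x))
    (hstep : ∀ t, t < N → ∃ x : X, x ≠ c ∧
      (∀ z : X, z ≠ x → Us (t + 1) z = Us t z) ∧
      ((S (fun y z => min (((ωo y z + W : ℤ) : WithTop ℤ)) (Us t z)) c x
          < ((Us t x : WithBot (WithTop ℤ))) ∧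
        ((Us (t + 1) x : WithBot (WithTop ℤ)))
          = S (fun y z => min (((ωo y z + W : ℤ) : WithTop ℤ)) (Us t z)) c x)
       ∨ (∃ y : X, y ≠ c ∧ Us t y < Us t x ∧
            Us t y ≤ ((ωo y x - W : ℤ) : WithTop ℤ) ∧
            Us (t + 1) x = Us t y))) :
    (∀ t, t < N → ∃ x : X, x ≠ c ∧ Us (t + 1) x < Us t x) ∧
    (∀ t, t ≤ N → ∀ x : X, x ≠ c →
      ∃ y z : X, y ≠ z ∧ Us t x = ((ωo y z + W : ℤ) : WithTop ℤ)) ∧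
    N ≤ (Fintype.card X) ^ 3 :=
  stmt8_general ωo W c Us N h0 hstep

end Schulze
end

section
/- (Lemma: reachability in G) Suppose U : X → ℤ∪{∞} with U(c) = ∞ is a fixed point of Rule 1 (for every x ≠ c, S[ω'](c,x) ≥ U(x) where ω'(y,z) = min(ω°(y,z)+W, U(z))). Define the directed graph G on X with edge (x,y) iff min(U(x), ω°(x,y)+W) ≥ U(y). Then every candidate x ∈ X is reachable from c in G. -/
open scoped Classical

namespace Schulze

private lemma walk {X : Type} (ωo : X → X → ℤ) (W : ℤ) (U : X → WithTop ℤ) (c : X)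
    (t : WithTop ℤ)
    (hmax : ∀ y, ¬ Relation.ReflTransGen
      (fun a b : X => a ≠ b ∧ U b ≤ min (U a) (((ωo a b + W : ℤ) : WithTop ℤ))) c y →
      U y ≤ t) :
    ∀ p : List X, ∀ u v : X, p.head? = some u → p.getLast? = some v →
      t ≤ pstr (fun y z => min (((ωo y z + W : ℤ) : WithTop ℤ)) (U z)) p →
      t ≤ U u →
      Relation.ReflTransGen
        (fun a b : X => a ≠ b ∧ U b ≤ min (U a) (((ωo a b + W : ℤ) : WithTop ℤ))) c u →
      Relation.ReflTransGen
        (fun a b : X => a ≠ b ∧ U b ≤ min (U a) (((ωo a b + W : ℤ) : WithTop ℤ))) c v := by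
  intro p
  induction p with
  | nil => intro u v h; simp at h
  | cons a l ih =>
    intro u v hhead hlast hstr hUu hreach
    have hua : a = u := by simpa using hhead
    subst hua
    match l with
    | [] =>
      have : a = v := by simpa using hlast
      subst this; exact hreach
    | w :: l' =>
      have hstr' : t ≤ min (min (((ωo a w + W : ℤ) : WithTop ℤ)) (U w))
          (pstr (fun y z => min (((ωo y z + W : ℤ) : WithTop ℤ)) (U z)) (w :: l')) := hstr
      have h1 : t ≤ ((ωo a w + W : ℤ) : WithTop ℤ) :=
        le_trans hstr' (le_trans (min_le_left _ _) (min_le_left _ _))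
      have h2 : t ≤ U w :=
        le_trans hstr' (le_trans (min_le_left _ _) (min_le_right _ _))
      have h3 : t ≤ pstr (fun y z => min (((ωo y z + W : ℤ) : WithTop ℤ)) (U z)) (w :: l') :=
        le_trans hstr' (min_le_right _ _)
      have hlast' : (w :: l').getLast? = some v := by
        rw [List.getLast?_cons_cons] at hlast; exact hlast
      have hreachw : Relation.ReflTransGen
          (fun a b : X => a ≠ b ∧ U b ≤ min (U a) (((ωo a b + W : ℤ) : WithTop ℤ))) c w := by
        by_cases hw : Relation.ReflTransGen
            (fun a b : X => a ≠ b ∧ U b ≤ min (U a) (((ωo a b + W : ℤ) : WithTop ℤ))) c w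
        · exact hw
        · have hUw : U w ≤ t := hmax w hw
          have huw : a ≠ w := by
            rintro rfl; exact hw hreach
          refine hreach.tail ⟨huw, ?_⟩
          exact le_min (le_trans hUw hUu) (le_trans hUw h1)
      exact ih w v rfl hlast' h3 h2 hreachw

theorem stmt9 {X : Type} [Fintype X] [DecidableEq X]
    (ωo : X → X → ℤ) (W : ℤ) (hW : 0 ≤ W) (c : X)
    (U : X → WithTop ℤ) (hUc : U c = ⊤)
    (hR1 : ∀ x : X, x ≠ c →
      ((U x : WithBot (WithTop ℤ)))
        ≤ S (fun y z => min (((ωo y z + W : ℤ) : WithTop ℤ)) (U z)) c x) :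
    ∀ x : X, Relation.ReflTransGen
      (fun a b : X => a ≠ b ∧ U b ≤ min (U a) (((ωo a b + W : ℤ) : WithTop ℤ))) c x := by
  by_contra hcon
  push_neg at hcon
  set E : X → X → Prop :=
    fun a b : X => a ≠ b ∧ U b ≤ min (U a) (((ωo a b + W : ℤ) : WithTop ℤ)) with hE
  have hne : (Finset.univ.filter (fun y => ¬ Relation.ReflTransGen E c y)).Nonempty := by
    obtain ⟨x, hx⟩ := hcon
    exact ⟨x, by simpa using hx⟩
  obtain ⟨x, hxmem, hxmax⟩ := Finset.exists_max_image
    (Finset.univ.filter (fun y => ¬ Relation.ReflTransGen E c y)) U hne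
  have hxnr : ¬ Relation.ReflTransGen E c x := by simpa using hxmem
  have hxc : x ≠ c := by
    rintro rfl; exact hxnr Relation.ReflTransGen.refl
  have hmax : ∀ y, ¬ Relation.ReflTransGen E c y → U y ≤ U x := by
    intro y hy; exact hxmax y (by simpa using hy)
  have hS := hR1 x hxc
  rw [S, Finset.le_sup_iff (by exact WithBot.bot_lt_coe _)] at hS
  obtain ⟨p, hpmem, hple⟩ := hS
  have hpath : IsPath c x p.1 := by simpa using hpmem
  have hle : U x ≤ pstr (fun y z => min (((ωo y z + W : ℤ) : WithTop ℤ)) (U z)) p.1 :=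
    WithBot.coe_le_coe.mp hple
  exact hxnr (walk ωo W U c (U x) hmax p.1 c x hpath.2.1 hpath.2.2 hle (by rw [hUc]; exact le_top)
    Relation.ReflTransGen.refl)

end Schulze
end

section
/- (Lemma 5: lower bound via arborescence) Let T be a spanning arborescence of G rooted at c, where edges (x,y) of G satisfy min(U(x), ω°(x,y)+W) ≥ U(y), and let ζ be a vote with ζ(x) > ζ(y) whenever (x,y) ∈ E(T) or U(x) > U(y). Let ω•(x,y) = ω°(x,y) + W if ζ(x) > ζ(y) and ω°(x,y) − W otherwise. Then S[ω•](c,x) ≥ U(x) for all x ≠ c. -/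
/-! Walk down the arborescence from `c` to `x`. Every tree edge `(parent y, y)` goes from a higher to
a lower `ζ`-rank, so it gets weight `ω° + W ≥ U y` in `ω•`, and `U` decreases along the walk; hence
the minimum edge weight of the tree path is at least `U x`. Since the rank strictly increases towards
the root, the walk reaches `c` and never revisits a vertex, so it is a path. -/

open scoped Classical

namespace Schulze

section

variable {X : Type}

theorem pstr_concat (ω : X → X → WithTop ℤ) {l : List X} {y : X} (hl : l.getLast? = some y)
    (x : X) : pstr ω (l ++ [x]) = min (pstr ω l) (ω y x) := by
  induction l with
  | nil => simp at hl
  | cons a t ih =>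
    cases t with
    | nil =>
      obtain rfl : a = y := by simpa using hl
      simp [pstr]
    | cons b t =>
      rw [List.getLast?_cons_cons] at hl
      simp only [List.cons_append] at ih ⊢
      rw [pstr, pstr, ih hl, min_assoc]

theorem coe_pstr_le_S [Fintype X] [DecidableEq X] (ω : X → X → WithTop ℤ) {x y : X}
    {l : List X} (hl : IsPath x y l) : ((pstr ω l : WithTop ℤ) : WithBot (WithTop ℤ)) ≤ S ω x y :=
  Finset.le_sup (f := fun p : {l : List X // l.Nodup} => (pstr ω p.1 : WithBot (WithTop ℤ)))
    (b := ⟨l, hl.1⟩) (by simpa using hl)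

theorem exists_isPath_le_pstr_of_parent (ω : X → X → WithTop ℤ) (U : X → WithTop ℤ) {c : X}
    {parent : X → X} {α : Type*} [Preorder α] [WellFoundedGT α] (r : X → α)
    (hr : ∀ x, x ≠ c → r x < r (parent x))
    (hU : ∀ x, x ≠ c → U x ≤ min (U (parent x)) (ω (parent x) x)) (x : X) :
    ∃ l, IsPath c x l ∧ U x ≤ pstr ω l ∧ ∀ y ∈ l, r x ≤ r y := by
  induction x using (InvImage.wf r wellFounded_gt).induction with
  | _ x ih =>
  by_cases hxc : x = c
  · subst hxc
    exact ⟨[x], by simp [IsPath], le_top, by simp⟩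
  obtain ⟨l, ⟨hnd, hhead, hlast⟩, hUl, hrl⟩ := ih (parent x) (hr x hxc)
  have hxl : x ∉ l := fun hx => (hr x hxc).not_ge (hrl x hx)
  refine ⟨l ++ [x], ⟨hnd.append (List.nodup_singleton x) (by simpa using hxl), ?_, by simp⟩,
    ?_, ?_⟩
  · cases l <;> simp_all
  · rw [pstr_concat ω hlast]
    exact le_min ((hU x hxc).trans (min_le_left _ _) |>.trans hUl)
      ((hU x hxc).trans (min_le_right _ _))
  · simp only [List.mem_append, List.mem_singleton]
    rintro y (hy | rfl)
    · exact (hr x hxc).le.trans (hrl y hy)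
    · exact le_rfl

end

theorem stmt12_general {X : Type} [Fintype X] [DecidableEq X]
    (ωo : X → X → ℤ) (W : ℤ) (c : X)
    (U : X → WithTop ℤ)
    (parent : X → X)
    (hedge : ∀ x : X, x ≠ c → parent x ≠ x ∧
      U x ≤ min (U (parent x)) (((ωo (parent x) x + W : ℤ) : WithTop ℤ)))
    (ζ : X ≃ Fin (Fintype.card X))
    (hζ : ∀ x y : X, ((y ≠ c ∧ parent y = x) ∨ U y < U x) → (ζ y : ℕ) < (ζ x : ℕ)) :
    ∀ x : X, x ≠ c →
      ((U x : WithBot (WithTop ℤ)))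
        ≤ S (ofInt (fun a b => if (ζ b : ℕ) < (ζ a : ℕ) then ωo a b + W else ωo a b - W)) c x := by
  intro x _
  set ω := ofInt (fun a b => if (ζ b : ℕ) < (ζ a : ℕ) then ωo a b + W else ωo a b - W)
  have hζ_parent : ∀ y, y ≠ c → (ζ y : ℕ) < ζ (parent y) := fun y hy => hζ _ y (.inl ⟨hy, rfl⟩)
  have hU : ∀ y, y ≠ c → U y ≤ min (U (parent y)) (ω (parent y) y) := fun y hy => by
    simpa only [ω, ofInt, if_pos (hζ_parent y hy)] using (hedge y hy).2
  obtain ⟨l, hl, hUl, -⟩ := exists_isPath_le_pstr_of_parent ω U ζ hζ_parent hU x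
  exact (WithBot.coe_le_coe.mpr hUl).trans (coe_pstr_le_S ω hl)

theorem stmt12 {X : Type} [Fintype X] [DecidableEq X]
    (ωo : X → X → ℤ) (W : ℤ) (hW : 0 ≤ W) (c : X)
    (U : X → WithTop ℤ) (hUc : U c = ⊤)
    (parent : X → X)
    (hedge : ∀ x : X, x ≠ c → parent x ≠ x ∧
      U x ≤ min (U (parent x)) (((ωo (parent x) x + W : ℤ) : WithTop ℤ)))
    (harb : ∀ x : X, ∃ n : ℕ, parent^[n] x = c)
    (ζ : X ≃ Fin (Fintype.card X))
    (hζ : ∀ x y : X, ((y ≠ c ∧ parent y = x) ∨ U y < U x) → (ζ y : ℕ) < (ζ x : ℕ)) :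
    ∀ x : X, x ≠ c →
      ((U x : WithBot (WithTop ℤ)))
        ≤ S (ofInt (fun a b => if (ζ b : ℕ) < (ζ a : ℕ) then ωo a b + W else ωo a b - W)) c x :=
  stmt12_general ωo W c U parent hedge ζ hζ

end Schulze
end

section
/- (Lemma 6: upper bound) Under the same setup, suppose additionally that U is a fixed point of Rule 2 (there are no x,y ≠ c with U(y) < U(x) and ω°(y,x) − W ≥ U(y)), and that U(x) > ω°(x,c) − W for all x ≠ c. Then S[ω•](x,c) < U(x) for all x ≠ c, where ω•(x,y) = ω°(x,y)+W if ζ(x) > ζ(y), else ω°(x,y)−W. -/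
open scoped Classical

namespace Schulze

private lemma key {X : Type} {n : ℕ} (ωo : X → X → ℤ) (W : ℤ) (c : X)
    (U : X → WithTop ℤ) (hUc : U c = ⊤)
    (hR2 : ¬ ∃ x y : X, x ≠ c ∧ y ≠ c ∧ U y < U x ∧ U y ≤ ((ωo y x - W : ℤ) : WithTop ℤ))
    (hup : ∀ x : X, x ≠ c → ((ωo x c - W : ℤ) : WithTop ℤ) < U x)
    (ζ : X ≃ Fin n)
    (hζ : ∀ x y : X, U y < U x → (ζ y : ℕ) < (ζ x : ℕ)) :
    ∀ (l : List X) (a b : X), (a :: b :: l).getLast? = some c → U a ≠ ⊤ →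
      pstr (ofInt (fun a b => if (ζ b : ℕ) < (ζ a : ℕ) then ωo a b + W else ωo a b - W))
        (a :: b :: l) < U a := by
  push_neg at hR2
  have hedge : ∀ a b : X, U a < U b → U a ≠ ⊤ →
      ofInt (fun a b => if (ζ b : ℕ) < (ζ a : ℕ) then ωo a b + W else ωo a b - W) a b < U a := by
    intro a b hab ha
    have hac : a ≠ c := by
      intro h; exact ha (h ▸ hUc)
    have hζab : (ζ a : ℕ) < (ζ b : ℕ) := hζ b a hab
    have : ofInt (fun a b => if (ζ b : ℕ) < (ζ a : ℕ) then ωo a b + W else ωo a b - W) a b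
        = ((ωo a b - W : ℤ) : WithTop ℤ) := by
      show ((if (ζ b : ℕ) < (ζ a : ℕ) then ωo a b + W else ωo a b - W : ℤ) : WithTop ℤ) = _
      rw [if_neg (Nat.lt_asymm hζab)]
    rw [this]
    by_cases hb : b = c
    · subst hb; exact hup a hac
    · exact hR2 b a hb hac hab
  intro l
  induction l with
  | nil =>
      intro a b hl ha
      have hbc : b = c := by simpa using hl
      have hUb : U b = ⊤ := by rw [hbc]; exact hUc
      have h := hedge a b (by rw [hUb]; exact lt_top_iff_ne_top.mpr ha) ha
      calc pstr _ [a, b] ≤ _ := min_le_left _ _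
        _ < U a := h
  | cons b' t ih =>
      intro a b hl ha
      have hl' : (b :: b' :: t).getLast? = some c := by simpa using hl
      by_cases hab : U a < U b
      · calc pstr _ (a :: b :: b' :: t) ≤ _ := min_le_left _ _
          _ < U a := hedge a b hab ha
      · push_neg at hab
        have hb : U b ≠ ⊤ := by
          intro h
          exact ha (top_le_iff.mp (h ▸ hab))
        calc pstr _ (a :: b :: b' :: t) ≤ pstr _ (b :: b' :: t) := min_le_right _ _
          _ < U b := ih b b' hl' hb
          _ ≤ U a := hab

theorem stmt13 {X : Type} [Fintype X] [DecidableEq X]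
    (ωo : X → X → ℤ) (W : ℤ) (hW : 0 ≤ W) (c : X)
    (U : X → WithTop ℤ) (hUc : U c = ⊤)
    (hR2 : ¬ ∃ x y : X, x ≠ c ∧ y ≠ c ∧ U y < U x ∧ U y ≤ ((ωo y x - W : ℤ) : WithTop ℤ))
    (hup : ∀ x : X, x ≠ c → ((ωo x c - W : ℤ) : WithTop ℤ) < U x)
    (ζ : X ≃ Fin (Fintype.card X))
    (hζ : ∀ x y : X, U y < U x → (ζ y : ℕ) < (ζ x : ℕ)) :
    ∀ x : X, x ≠ c →
      S (ofInt (fun a b => if (ζ b : ℕ) < (ζ a : ℕ) then ωo a b + W else ωo a b - W)) x c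
        < ((U x : WithBot (WithTop ℤ))) := by
  intro x hx
  unfold S
  rw [Finset.sup_lt_iff (WithBot.bot_lt_coe _)]
  intro p hp
  obtain ⟨_, hh, hl⟩ := (Finset.mem_filter.mp hp).2
  rcases hpl : p.1 with _ | ⟨a, _ | ⟨b, t⟩⟩
  · rw [hpl] at hh; simp at hh
  · rw [hpl] at hh hl
    have hax : a = x := by simpa using hh
    have hac : a = c := by simpa using hl
    exact absurd (hax ▸ hac) hx
  · rw [hpl] at hh hl
    have hax : a = x := by simpa using hh
    subst hax
    rw [WithBot.coe_lt_coe]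
    by_cases hU : U a = ⊤
    · rw [hU]
      refine lt_of_le_of_lt (min_le_left _ _) ?_
      exact WithTop.coe_lt_top _
    · exact key ωo W c U hUc hR2 hup ζ hζ t a b hl hU

end Schulze
end
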